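/- Let t be an odd positive integer and let p_1, …, p_t, q be distinct primes with p_i ≡ 5 (mod 8) for all i and q ≡ 7 (mod 8), and suppose the Legendre symbol (q/p_i) = 1 for all i; set P = p_1⋯p_t. If there exist nonzero integers x, y, z, w with gcd(x, y) = 1 satisfying Px² + y² = z² and Px² − y² = qw², then the quartic residue symbol (q/P)_4 = −1, i.e., the number of indices i ∈ {1,…,t} with q^{(p_i−1)/4} ≡ −1 (mod p_i) is odd. -/

import Mathlib

/-!
Reducing modulo 8 (where `P ≡ 5`, `q ≡ 7`) forces `y` and `w` to be odd, and since `P` is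
squarefree and prime to `q`, the equations make `y` and `w` prime to `P`. As
`P ≡ 1 (mod 4)`, reciprocity gives `(y/P) = (P/|y|) = (P x²/|y|) = (z²/|y|) = 1` and likewise
`(w/P) = 1`, so `∏ᵢ (yw/pᵢ) = (yw/P) = 1`. Modulo `pᵢ` the second equation reads
`q ≡ -(y/w)²`, and since `(pᵢ - 1)/4` is odd, `q^((pᵢ-1)/4) = -(yw)^((pᵢ-1)/2) = -(yw/pᵢ)`.
Hence `q` is a quartic non-residue at `pᵢ` exactly when `(yw/pᵢ) = 1`, and an even number of
`-1`s among an odd number `t` of signs leaves an odd number of `+1`s.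
-/

open Finset

open scoped NumberTheorySymbols

theorem prod_mod_eight_eq_five {ι : Type*} {s : Finset ι} {a : ι → ℕ}
    (ha : ∀ i ∈ s, a i % 8 = 5) (hs : Odd #s) : (∏ i ∈ s, a i) % 8 = 5 := by
  obtain ⟨k, hk⟩ := hs
  rw [prod_nat_mod, prod_congr rfl ha, prod_const, hk, pow_succ, pow_mul, Nat.mul_mod,
    Nat.pow_mod]
  norm_num

theorem odd_and_odd_of_mod_eight {P q x y z w : ℤ} (hP : P % 8 = 5) (hq : q % 8 = 7)
    (hxy : IsCoprime x y) (h₁ : P * x ^ 2 + y ^ 2 = z ^ 2) (h₂ : P * x ^ 2 - y ^ 2 = q * w ^ 2) :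
    Odd y ∧ Odd w := by
  have key : ∀ X Y Z W : ZMod 8, 5 * X ^ 2 + Y ^ 2 = Z ^ 2 → 5 * X ^ 2 - Y ^ 2 = 7 * W ^ 2 →
      (4 * Y = 0 → 4 * X = 0) ∧ (4 * W = 0 → 4 * Y = 0) := by decide
  have even_iff (n : ℤ) : Even n ↔ 4 * (n : ZMod 8) = 0 := by
    rw [← Int.cast_ofNat, ← Int.cast_mul, ZMod.intCast_zmod_eq_zero_iff_dvd, even_iff_two_dvd]
    omega
  have hP8 : (P : ZMod 8) = 5 := by rw [← ZMod.intCast_mod, Nat.cast_ofNat, hP]; rfl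
  have hq8 : (q : ZMod 8) = 7 := by rw [← ZMod.intCast_mod, Nat.cast_ofNat, hq]; rfl
  obtain ⟨hyx, hwy⟩ := key x y z w
    (by rw [← hP8]; exact_mod_cast congrArg (Int.cast : ℤ → ZMod 8) h₁)
    (by rw [← hP8, ← hq8]; exact_mod_cast congrArg (Int.cast : ℤ → ZMod 8) h₂)
  have hy : Odd y := by
    rw [← Int.not_even_iff_odd]
    intro hy
    have hx := (even_iff x).mpr (hyx ((even_iff y).mp hy))
    exact absurd (hxy.isUnit_of_dvd' hx.two_dvd hy.two_dvd) (by decide)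
  refine ⟨hy, ?_⟩
  rw [← Int.not_even_iff_odd] at hy ⊢
  exact fun hw => hy ((even_iff y).mpr (hwy ((even_iff w).mp hw)))

theorem squarefree_prod_primes_of_injective {ι : Type*} (s : Finset ι) {p : ι → ℕ}
    (hp : ∀ i, (p i).Prime) (hinj : Function.Injective p) :
    Squarefree (∏ i ∈ s, (p i : ℤ)) :=
  squarefree_prod_of_pairwise_isCoprime
    (fun i _ j _ hij => (Nat.isCoprime_iff_coprime.mpr
      ((Nat.coprime_primes (hp i) (hp j)).mpr (hinj.ne hij))).isRelPrime)
    fun i _ => (Nat.prime_iff_prime_int.mp (hp i)).squarefree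

theorem isCoprime_of_squarefree_of_sub_sq_eq_mul_sq {P q x y w : ℤ} (hP : Squarefree P)
    (hPq : IsCoprime P q) (hxy : IsCoprime x y) (h : P * x ^ 2 - y ^ 2 = q * w ^ 2) :
    IsCoprime P y := by
  refine isCoprime_of_prime_dvd (fun h0 => hP.ne_zero h0.1) fun r hr hrP hry => ?_
  have hrq : ¬ r ∣ q := fun hrq => hr.not_isUnit (hPq.isUnit_of_dvd' hrP hrq)
  have hrqw : r ∣ q * w ^ 2 := h ▸ dvd_sub (hrP.mul_right _) (dvd_pow hry two_ne_zero)
  have hrw : r ∣ w := hr.dvd_of_dvd_pow ((hr.dvd_or_dvd hrqw).resolve_left hrq)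
  obtain ⟨R, rfl⟩ := hrP
  have hrR : ¬ r ∣ R := fun ⟨R', hR'⟩ => hr.not_isUnit (hP r ⟨R', by rw [hR', mul_assoc]⟩)
  have hsq : r * r ∣ r * (R * x ^ 2) := by
    rw [← mul_assoc, show r * R * x ^ 2 = q * w ^ 2 + y ^ 2 by linarith, sq, sq]
    exact dvd_add (dvd_mul_of_dvd_right (mul_dvd_mul hrw hrw) q) (mul_dvd_mul hry hry)
  have hrx : r ∣ x := hr.dvd_of_dvd_pow
    ((hr.dvd_or_dvd ((mul_dvd_mul_iff_left hr.ne_zero).mp hsq)).resolve_left hrR)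
  exact hr.not_isUnit (hxy.isUnit_of_dvd' hrx hry)

theorem jacobiSym_eq_one_of_dvd_sq_sub_mul_sq {P : ℕ} (hP : P % 4 = 1) {a x u : ℤ}
    (ha : Odd a) (hxa : IsCoprime x a) (hua : IsCoprime u a) (h : a ∣ u ^ 2 - P * x ^ 2) :
    J(a | P) = 1 := by
  have hgcd {b : ℤ} (hb : IsCoprime b a) : b.gcd a.natAbs = 1 := by
    simpa [Int.gcd, Int.natAbs_abs] using Int.isCoprime_iff_gcd_eq_one.mp hb
  have hPa : J(P | a.natAbs) = 1 := by
    have hmod : P * x ^ 2 ≡ u ^ 2 [ZMOD a.natAbs] := Int.modEq_iff_dvd.mpr (Int.natAbs_dvd.mpr h)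
    have := jacobiSym.mod_left' hmod
    rwa [jacobiSym.mul_left, jacobiSym.sq_one' (hgcd hxa),
      jacobiSym.sq_one' (hgcd hua), mul_one] at this
  have hrec := jacobiSym.quadratic_reciprocity_one_mod_four' (Int.natAbs_odd.mpr ha) hP
  rcases Int.natAbs_eq a with ha' | ha' <;> rw [ha']
  · rw [hrec, hPa]
  · rw [jacobiSym.neg _ (Nat.odd_iff.mpr (by omega)), ZMod.χ₄_nat_one_mod_four hP, one_mul,
      hrec, hPa]

theorem jacobiSym_mul_eq_one_of_sub_sq_eq_mul_sq {P : ℕ} (hP : P % 4 = 1) {q x y z w : ℤ}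
    (hy : Odd y) (hw : Odd w) (hPy : IsCoprime (P : ℤ) y) (hxy : IsCoprime x y)
    (h₁ : P * x ^ 2 + y ^ 2 = z ^ 2) (h₂ : P * x ^ 2 - y ^ 2 = q * w ^ 2) :
    J(y * w | P) = 1 := by
  have hPxy : IsCoprime (P * x ^ 2) y := hPy.mul_left (hxy.pow_left (m := 2))
  have hzy : IsCoprime z y := by
    have := hPxy.add_mul_right_left y
    rwa [← sq, h₁, IsCoprime.pow_left_iff two_pos] at this
  have hwy : IsCoprime w y := by
    have := hPxy.add_mul_right_left (-y)
    rw [neg_mul, ← sq, ← sub_eq_add_neg, h₂] at this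
    exact (IsCoprime.pow_left_iff two_pos).mp this.of_mul_left_right
  have hxw : IsCoprime x w := by
    have := (hxy.pow_right (n := 2)).neg_right.add_mul_left_right (P * x)
    rw [show -y ^ 2 + x * (P * x) = q * w ^ 2 by linear_combination h₂] at this
    exact (IsCoprime.pow_right_iff two_pos).mp this.of_mul_right_right
  rw [jacobiSym.mul_left,
    jacobiSym_eq_one_of_dvd_sq_sub_mul_sq hP hy hxy hzy ⟨y, by linear_combination -h₁⟩,
    jacobiSym_eq_one_of_dvd_sq_sub_mul_sq hP hw hxw hwy.symm ⟨-(q * w), by linear_combination -h₂⟩,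
    one_mul]

theorem jacobiSym_prod_right {ι : Type*} (a : ℤ) (s : Finset ι) {b : ι → ℕ}
    (hb : ∀ i ∈ s, b i ≠ 0) : J(a | ∏ i ∈ s, b i) = ∏ i ∈ s, J(a | b i) := by
  induction s using Finset.cons_induction with
  | empty => simp
  | cons i s hi ih =>
    rw [prod_cons, prod_cons, jacobiSym.mul_right' _ (hb i (mem_cons_self i s))
      (prod_ne_zero_iff.mpr fun j hj => hb j (mem_cons_of_mem hj)),
      ih fun j hj => hb j (mem_cons_of_mem hj)]

theorem pow_div_four_eq_neg_jacobiSym {p : ℕ} [Fact p.Prime] (hp : p % 8 = 5) {c : ZMod p}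
    {y w : ℤ} (hw : (w : ZMod p) ≠ 0) (h : c * w ^ 2 = -y ^ 2) :
    c ^ ((p - 1) / 4) = -(J(y * w | p) : ZMod p) := by
  obtain ⟨m, hm, hm4, hm2⟩ : ∃ m, Odd m ∧ (p - 1) / 4 = m ∧ p / 2 = 2 * m :=
    ⟨p / 4, Nat.odd_iff.mpr (by omega), by omega, by omega⟩
  have hfermat : (w : ZMod p) ^ (2 * m) * (w : ZMod p) ^ (2 * m) = 1 := by
    rw [← pow_add, ← ZMod.pow_card_sub_one_eq_one hw]
    congr 1
    omega
  rw [← jacobiSym.legendreSym.to_jacobiSym, legendreSym.eq_pow, hm4, hm2]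
  push_cast
  calc c ^ m = c ^ m * ((w : ZMod p) ^ (2 * m) * (w : ZMod p) ^ (2 * m)) := by
        rw [hfermat, mul_one]
    _ = (c * w ^ 2) ^ m * (w : ZMod p) ^ (2 * m) := by ring
    _ = -((y * w) ^ (2 * m)) := by rw [h, hm.neg_pow]; ring

theorem pow_div_four_eq_neg_one_iff {p : ℕ} [Fact p.Prime] (hp : p % 8 = 5) {c : ZMod p}
    {y w : ℤ} (hy : (y : ZMod p) ≠ 0) (h : c * w ^ 2 = -y ^ 2) :
    c ^ ((p - 1) / 4) = -1 ↔ J(y * w | p) = 1 := by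
  have hw : (w : ZMod p) ≠ 0 := fun hw => hy <| pow_eq_zero_iff two_ne_zero |>.mp <|
    neg_eq_zero.mp (by rw [← h, hw]; ring)
  have hyw : ((y * w : ℤ) : ZMod p) ≠ 0 := by push_cast; exact mul_ne_zero hy hw
  have : Fact (2 < p) := ⟨by omega⟩
  rw [pow_div_four_eq_neg_jacobiSym hp hw h, neg_inj, ← jacobiSym.legendreSym.to_jacobiSym]
  rcases legendreSym.eq_one_or_neg_one p hyw with hJ | hJ <;> rw [hJ]
  · simp
  · simp [ZMod.neg_one_ne_one]

theorem odd_card_filter_eq_one_of_prod_eq_one {ι : Type*} {s : Finset ι} {f : ι → ℤ}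
    (hf : ∀ i ∈ s, f i = 0 ∨ f i = 1 ∨ f i = -1) (hprod : ∏ i ∈ s, f i = 1) (hs : Odd #s) :
    Odd #{i ∈ s | f i = 1} := by
  have hf' (i) (hi : i ∈ s) : f i = 1 ∨ f i = -1 :=
    (hf i hi).resolve_left (prod_ne_zero_iff.mp (hprod ▸ one_ne_zero) i hi)
  have hpos : ∏ i ∈ s with f i = 1, f i = 1 := prod_eq_one fun i hi => (mem_filter.mp hi).2
  have hneg : ∏ i ∈ s with ¬ f i = 1, f i = (-1) ^ #{i ∈ s | ¬ f i = 1} :=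
    prod_eq_pow_card fun i hi => (hf' i (mem_filter.mp hi).1).resolve_left (mem_filter.mp hi).2
  rw [← prod_filter_mul_prod_filter_not s (fun i => f i = 1), hpos, hneg, one_mul,
    neg_one_pow_eq_one_iff_even (by norm_num)] at hprod
  rw [← card_filter_add_card_filter_not (fun i => f i = 1)] at hs
  exact Nat.odd_add.mp hs |>.mpr hprod

theorem pow_div_four_eq_neg_one_iff_of_dvd {p P q : ℕ} [Fact p.Prime] (hp : p % 8 = 5)
    (hpP : p ∣ P) {x y w : ℤ} (hPy : IsCoprime (P : ℤ) y) (h : P * x ^ 2 - y ^ 2 = q * w ^ 2) :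
    (q : ZMod p) ^ ((p - 1) / 4) = -1 ↔ J(y * w | p) = 1 := by
  refine pow_div_four_eq_neg_one_iff hp ?_ ?_
  · rw [Ne, ZMod.intCast_zmod_eq_zero_iff_dvd]
    exact fun hpy => (Nat.prime_iff_prime_int.mp Fact.out).not_isUnit
      (hPy.isUnit_of_dvd' (Int.natCast_dvd_natCast.mpr hpP) hpy)
  · have hP0 : (P : ZMod p) = 0 := (ZMod.natCast_eq_zero_iff _ _).mpr hpP
    have := congrArg (Int.cast : ℤ → ZMod p) h
    push_cast [hP0] at this
    linear_combination -this

theorem stmt14_general (t : ℕ) (ht : Odd t)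
    (p : Fin t → ℕ) (q : ℕ)
    (hp : ∀ i, (p i).Prime) (hq : q.Prime)
    (hinj : Function.Injective p) (hpq : ∀ i, p i ≠ q)
    (hp5 : ∀ i, p i % 8 = 5) (hq7 : q % 8 = 7)
    (x y z w : ℤ)
    (hgcd : Int.gcd x y = 1)
    (heq1 : (∏ i, (p i : ℤ)) * x ^ 2 + y ^ 2 = z ^ 2)
    (heq2 : (∏ i, (p i : ℤ)) * x ^ 2 - y ^ 2 = (q : ℤ) * w ^ 2) :
    Odd (univ.filter fun i => (q : ZMod (p i)) ^ ((p i - 1) / 4) = -1).card := by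
  have hcard : Odd #(univ : Finset (Fin t)) := by rwa [card_univ, Fintype.card_fin]
  have hxy : IsCoprime x y := Int.isCoprime_iff_gcd_eq_one.mpr hgcd
  have hPq : IsCoprime (∏ i, (p i : ℤ)) q := IsCoprime.prod_left fun i _ =>
    Nat.isCoprime_iff_coprime.mpr ((Nat.coprime_primes (hp i) hq).mpr (hpq i))
  have hPy := isCoprime_of_squarefree_of_sub_sq_eq_mul_sq
    (squarefree_prod_primes_of_injective univ hp hinj) hPq hxy heq2
  rw [← Nat.cast_prod] at heq1 heq2 hPy
  have hP8 : (∏ i, p i) % 8 = 5 := prod_mod_eight_eq_five (fun i _ => hp5 i) hcard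
  obtain ⟨hy, hw⟩ := odd_and_odd_of_mod_eight (by omega) (by omega) hxy heq1 heq2
  have hJ := jacobiSym_mul_eq_one_of_sub_sq_eq_mul_sq (by omega) hy hw hPy hxy heq1 heq2
  rw [jacobiSym_prod_right _ _ fun i _ => (hp i).ne_zero] at hJ
  rw [filter_congr fun i _ =>
    have := Fact.mk (hp i)
    pow_div_four_eq_neg_one_iff_of_dvd (hp5 i) (dvd_prod_of_mem p (mem_univ i)) hPy heq2]
  exact odd_card_filter_eq_one_of_prod_eq_one (fun i _ => jacobiSym.trichotomy _ _) hJ hcard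

/-- Let `t` be odd and `p_1, …, p_t, q` distinct primes with `p_i ≡ 5 (mod 8)`,
`q ≡ 7 (mod 8)` and Legendre symbol `(q / p_i) = 1` for all `i`; set `P = p_1 ⋯ p_t`.
If there are nonzero integers `x, y, z, w` with `gcd(x, y) = 1` satisfying
`P x² + y² = z²` and `P x² − y² = q w²`, then the quartic residue symbol
`(q / P)₄ = -1`, i.e. the number of indices `i` with
`q^((p_i - 1)/4) ≡ -1 (mod p_i)` is odd. -/
theorem stmt14 (t : ℕ) (ht : Odd t)
    (p : Fin t → ℕ) (q : ℕ)
    (hp : ∀ i, (p i).Prime) (hq : q.Prime)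
    (hinj : Function.Injective p) (hpq : ∀ i, p i ≠ q)
    (hp5 : ∀ i, p i % 8 = 5) (hq7 : q % 8 = 7)
    (hleg : ∀ i, jacobiSym q (p i) = 1)
    (x y z w : ℤ) (hx : x ≠ 0) (hy : y ≠ 0) (hz : z ≠ 0) (hw : w ≠ 0)
    (hgcd : Int.gcd x y = 1)
    (heq1 : (∏ i, (p i : ℤ)) * x ^ 2 + y ^ 2 = z ^ 2)
    (heq2 : (∏ i, (p i : ℤ)) * x ^ 2 - y ^ 2 = (q : ℤ) * w ^ 2) :
    Odd (univ.filter fun i => (q : ZMod (p i)) ^ ((p i - 1) / 4) = -1).card :=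
  stmt14_general t ht p q hp hq hinj hpq hp5 hq7 x y z w hgcd heq1 heq2
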